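/- For λ > 0 and any C > 0, there exist unique real numbers α_C and β_C such that G(α_C, 1) = C and lim_{x₁→0} G(β_C, x₁) = C; moreover α_C > 0 and β_C < 0. -/

import Mathlib

open Real

/-- The function `G(a₁, x₁) = a₁(λ+a₁²)^{1/4}(2x₁²-1) + (1/2)∫₀^{a₁} (x²+2λ)/(λ+x²)^{3/4} dx`.
Note that `G lam a 0 = a(λ+a²)^{1/4}·(-1) + (1/2)∫₀^{a}...` is the value
`lim_{x₁ → 0} G(a₁, x₁)`. -/
noncomputable def G (lam a x : ℝ) : ℝ :=
  a * (lam + a ^ 2) ^ ((1 : ℝ) / 4) * (2 * x ^ 2 - 1) +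
    (1 / 2) * ∫ t in (0 : ℝ)..a, (t ^ 2 + 2 * lam) / (lam + t ^ 2) ^ ((3 : ℝ) / 4)

lemma hasDerivAt_G (lam x : ℝ) (hlam : 0 < lam) (a : ℝ) :
    HasDerivAt (fun a => G lam a x)
      ((1 * (lam + a ^ 2) ^ ((1 : ℝ) / 4) +
          a * (2 * a * ((1 : ℝ) / 4) * (lam + a ^ 2) ^ ((1 : ℝ) / 4 - 1))) * (2 * x ^ 2 - 1) +
        (1 / 2) * ((a ^ 2 + 2 * lam) / (lam + a ^ 2) ^ ((3 : ℝ) / 4))) a := by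
  have hs : (0:ℝ) < lam + a ^ 2 := by positivity
  have hcont : Continuous (fun t : ℝ => (t ^ 2 + 2 * lam) / (lam + t ^ 2) ^ ((3:ℝ)/4)) := by
    apply Continuous.div (by continuity)
    · exact (by continuity : Continuous fun t : ℝ => lam + t ^ 2).rpow_const
        (fun t => Or.inl (by positivity))
    · intro t; positivity
  have h1 : HasDerivAt (fun a : ℝ => lam + a ^ 2) (2 * a) a := by
    simpa using ((hasDerivAt_pow 2 a).const_add lam)
  have h2 := h1.rpow_const (p := (1:ℝ)/4) (Or.inl hs.ne')
  have h3 := (hasDerivAt_id a).mul h2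
  have h4 := (hcont.integral_hasStrictDerivAt 0 a).hasDerivAt
  exact ((h3.mul_const (2 * x ^ 2 - 1)).add (h4.const_mul (1/2)))

lemma G_zero (lam x : ℝ) : G lam 0 x = 0 := by
  simp [G]

lemma G_cont (lam x : ℝ) (hlam : 0 < lam) : Continuous (fun a => G lam a x) :=
  Differentiable.continuous (fun a => (hasDerivAt_G lam x hlam a).differentiableAt)

lemma deriv_G0 (lam : ℝ) (hlam : 0 < lam) (a : ℝ) :
    deriv (fun a => G lam a 0) a = -(a ^ 2) * (lam + a ^ 2) ^ (-(3:ℝ)/4) := by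
  rw [(hasDerivAt_G lam 0 hlam a).deriv]
  have hs : (0:ℝ) < lam + a ^ 2 := by positivity
  have e1 : (lam + a ^ 2) ^ ((1:ℝ)/4 - 1) = (lam + a ^ 2) ^ (-(3:ℝ)/4) := by norm_num
  have e2 : (lam + a ^ 2) ^ ((1:ℝ)/4) = (lam + a ^ 2) * (lam + a ^ 2) ^ (-(3:ℝ)/4) := by
    rw [show ((1:ℝ)/4) = 1 + -(3:ℝ)/4 by norm_num, Real.rpow_add hs, Real.rpow_one]
  have e3 : (a ^ 2 + 2 * lam) / (lam + a ^ 2) ^ ((3:ℝ)/4)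
      = (a ^ 2 + 2 * lam) * (lam + a ^ 2) ^ (-(3:ℝ)/4) := by
    rw [div_eq_mul_inv, ← Real.rpow_neg hs.le]; norm_num
  rw [e1, e2, e3]; ring

lemma G1_strictMono (lam : ℝ) (hlam : 0 < lam) : StrictMono (fun a => G lam a 1) := by
  apply strictMono_of_deriv_pos
  intro a
  rw [(hasDerivAt_G lam 1 hlam a).deriv]
  have hs : (0:ℝ) < lam + a ^ 2 := by positivity
  have t1 : (0:ℝ) < (lam + a ^ 2) ^ ((1:ℝ)/4) := by positivity
  have t2 : (0:ℝ) ≤ a ^ 2 * (lam + a ^ 2) ^ ((1:ℝ)/4 - 1) := by positivity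
  have t3 : (0:ℝ) < (a ^ 2 + 2 * lam) / (lam + a ^ 2) ^ ((3:ℝ)/4) := by positivity
  nlinarith [t1, t2, t3]

lemma G0_strictAnti (lam : ℝ) (hlam : 0 < lam) : StrictAnti (fun a => G lam a 0) := by
  have hder : ∀ a : ℝ, a ≠ 0 → deriv (fun a => G lam a 0) a < 0 := by
    intro a ha
    rw [deriv_G0 lam hlam a]
    have h1 : (0:ℝ) < (lam + a ^ 2) ^ (-(3:ℝ)/4) := by positivity
    have ha2 : 0 < a ^ 2 := by positivity
    nlinarith
  have h1 : StrictAntiOn (fun a => G lam a 0) (Set.Iic 0) := by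
    apply strictAntiOn_of_deriv_neg (convex_Iic 0) (G_cont lam 0 hlam).continuousOn
    intro a ha
    rw [interior_Iic] at ha
    exact hder a (ne_of_lt ha)
  have h2 : StrictAntiOn (fun a => G lam a 0) (Set.Ici 0) := by
    apply strictAntiOn_of_deriv_neg (convex_Ici 0) (G_cont lam 0 hlam).continuousOn
    intro a ha
    rw [interior_Ici] at ha
    exact hder a (ne_of_gt ha)
  intro a b hab
  rcases le_or_gt b 0 with hb | hb
  · exact h1 (Set.mem_Iic.mpr (hab.le.trans hb)) (Set.mem_Iic.mpr hb) hab
  rcases le_or_gt 0 a with ha | ha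
  · exact h2 (Set.mem_Ici.mpr ha) (Set.mem_Ici.mpr hb.le) hab
  · exact lt_trans (h2 Set.self_mem_Ici (Set.mem_Ici.mpr hb.le) hb)
      (h1 (Set.mem_Iic.mpr ha.le) Set.self_mem_Iic ha)

/-- For `λ > 0` and `C > 0` there are unique `α_C`, `β_C` with `G(α_C, 1) = C` and
`lim_{x₁→0} G(β_C, x₁) = C`; moreover `α_C > 0` and `β_C < 0`. -/
theorem G_alpha_beta (lam C : ℝ) (hlam : 0 < lam) (hC : 0 < C) :
    (∃! α : ℝ, G lam α 1 = C) ∧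
    (∃! β : ℝ, G lam β 0 = C) ∧
    (∀ α : ℝ, G lam α 1 = C → 0 < α) ∧
    (∀ β : ℝ, G lam β 0 = C → β < 0) := by
  have hmono := G1_strictMono lam hlam
  have hanti := G0_strictAnti lam hlam
  -- upper value for G · 1
  have hquarter : (0:ℝ) < lam ^ ((1:ℝ)/4) := by positivity
  set A : ℝ := C / lam ^ ((1:ℝ)/4) + 1 with hA
  have hApos : 0 < A := by positivity
  have hGA : C ≤ G lam A 1 := by
    have hb1 : A * lam ^ ((1:ℝ)/4) ≤ A * (lam + A ^ 2) ^ ((1:ℝ)/4) := by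
      apply mul_le_mul_of_nonneg_left _ hApos.le
      exact Real.rpow_le_rpow hlam.le (by nlinarith [sq_nonneg A]) (by norm_num)
    have hb2 : (0:ℝ) ≤ ∫ t in (0:ℝ)..A, (t ^ 2 + 2 * lam) / (lam + t ^ 2) ^ ((3:ℝ)/4) := by
      apply intervalIntegral.integral_nonneg hApos.le
      intro t _; positivity
    have hAval : A * lam ^ ((1:ℝ)/4) = C + lam ^ ((1:ℝ)/4) := by
      rw [hA, add_mul, one_mul, div_mul_cancel₀ _ hquarter.ne']
    have hCle : C ≤ A * (lam + A ^ 2) ^ ((1:ℝ)/4) := by linarith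
    simp only [G]
    nlinarith [hCle, hb2]
  -- existence of α
  obtain ⟨α, hαmem, hαval⟩ : ∃ α ∈ Set.Icc (0:ℝ) A, G lam α 1 = C := by
    have hIcc := intermediate_value_Icc hApos.le ((G_cont lam 1 hlam).continuousOn)
    have hmem : C ∈ Set.Icc (G lam 0 1) (G lam A 1) := by
      rw [G_zero]; exact ⟨hC.le, hGA⟩
    obtain ⟨α, hα1, hα2⟩ := hIcc hmem
    exact ⟨α, hα1, hα2⟩
  -- lower value for G · 0 at very negative B
  set c : ℝ := ((lam + 1) ^ ((3:ℝ)/4))⁻¹ with hc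
  have hLp : (0:ℝ) < (lam + 1) ^ ((3:ℝ)/4) := by positivity
  have hcpos : 0 < c := by positivity
  have hantiH : AntitoneOn (fun a => G lam a 0 + c * a) (Set.Iic (-1:ℝ)) := by
    apply antitoneOn_of_deriv_nonpos (convex_Iic _)
    · exact ((G_cont lam 0 hlam).add (continuous_const.mul continuous_id)).continuousOn
    · intro a ha
      rw [interior_Iic] at ha
      exact (((hasDerivAt_G lam 0 hlam a).add
        ((hasDerivAt_id a).const_mul c)).differentiableAt).differentiableWithinAt
    · intro a ha
      rw [interior_Iic] at ha
      have hda : HasDerivAt (fun a => G lam a 0 + c * a)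
          (deriv (fun a => G lam a 0) a + c * 1) a :=
        (hasDerivAt_G lam 0 hlam a).deriv ▸
          ((hasDerivAt_G lam 0 hlam a).add ((hasDerivAt_id a).const_mul c))
      rw [hda.deriv, deriv_G0 lam hlam a]
      have ha' : a < -1 := ha
      have ha1 : (1:ℝ) ≤ a ^ 2 := by nlinarith [ha']
      have hs : (0:ℝ) < lam + a ^ 2 := by positivity
      have hden : (0:ℝ) < (lam + a ^ 2) ^ ((3:ℝ)/4) := by positivity
      have key : (lam + a ^ 2) ^ ((3:ℝ)/4) ≤ (lam + 1) ^ ((3:ℝ)/4) * a ^ 2 := by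
        have k1 : (lam + a ^ 2) ≤ (lam + 1) * a ^ 2 := by nlinarith
        have k2 : (lam + a ^ 2) ^ ((3:ℝ)/4) ≤ ((lam + 1) * a ^ 2) ^ ((3:ℝ)/4) :=
          Real.rpow_le_rpow hs.le k1 (by norm_num)
        have k3 : ((lam + 1) * a ^ 2) ^ ((3:ℝ)/4)
            = (lam + 1) ^ ((3:ℝ)/4) * (a ^ 2) ^ ((3:ℝ)/4) :=
          Real.mul_rpow (by positivity) (by positivity)
        have k4 : (a ^ 2 : ℝ) ^ ((3:ℝ)/4) ≤ a ^ 2 := by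
          calc (a ^ 2 : ℝ) ^ ((3:ℝ)/4) ≤ (a ^ 2) ^ (1:ℝ) :=
                Real.rpow_le_rpow_of_exponent_le ha1 (by norm_num)
            _ = a ^ 2 := Real.rpow_one _
        calc (lam + a ^ 2) ^ ((3:ℝ)/4) ≤ (lam + 1) ^ ((3:ℝ)/4) * (a ^ 2) ^ ((3:ℝ)/4) := by
              rw [← k3]; exact k2
          _ ≤ (lam + 1) ^ ((3:ℝ)/4) * a ^ 2 :=
              mul_le_mul_of_nonneg_left k4 (by positivity)
      have ha2 : (0:ℝ) < a ^ 2 := by nlinarith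
      have h5 : ((lam + 1) ^ ((3:ℝ)/4) * a ^ 2)⁻¹ ≤ ((lam + a ^ 2) ^ ((3:ℝ)/4))⁻¹ :=
        inv_anti₀ hden key
      have h6 : a ^ 2 * ((lam + 1) ^ ((3:ℝ)/4) * a ^ 2)⁻¹ = c := by
        rw [hc, mul_inv, mul_left_comm, mul_inv_cancel₀ ha2.ne', mul_one]
      have hcle : c ≤ a ^ 2 * ((lam + a ^ 2) ^ ((3:ℝ)/4))⁻¹ := by
        rw [← h6]
        exact mul_le_mul_of_nonneg_left h5 ha2.le
      have hrw : (lam + a ^ 2) ^ (-(3:ℝ)/4) = ((lam + a ^ 2) ^ ((3:ℝ)/4))⁻¹ := by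
        rw [← Real.rpow_neg hs.le]; norm_num
      rw [hrw]
      have : -(a ^ 2) * ((lam + a ^ 2) ^ ((3:ℝ)/4))⁻¹
          = -(a ^ 2 * ((lam + a ^ 2) ^ ((3:ℝ)/4))⁻¹) := by ring
      rw [this]
      linarith
  set B : ℝ := min (-1) ((G lam (-1) 0 - c - C) / c) with hB
  have hB1 : B ≤ -1 := min_le_left _ _
  have hBq : B ≤ (G lam (-1) 0 - c - C) / c := min_le_right _ _
  have hGB : C ≤ G lam B 0 := by
    have hh := hantiH (Set.mem_Iic.mpr hB1) Set.self_mem_Iic hB1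
    simp only at hh
    have hcB : c * B ≤ G lam (-1) 0 - c - C := by
      have := mul_le_mul_of_nonneg_left hBq hcpos.le
      rwa [mul_div_cancel₀ _ hcpos.ne'] at this
    linarith
  have hB0 : B ≤ 0 := hB1.trans (by norm_num)
  obtain ⟨β, hβmem, hβval⟩ : ∃ β ∈ Set.Icc B 0, G lam β 0 = C := by
    have hIcc := intermediate_value_Icc' hB0 ((G_cont lam 0 hlam).continuousOn)
    have hmem : C ∈ Set.Icc (G lam 0 0) (G lam B 0) := by
      rw [G_zero]; exact ⟨hC.le, hGB⟩
    obtain ⟨β, hβ1, hβ2⟩ := hIcc hmem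
    exact ⟨β, hβ1, hβ2⟩
  refine ⟨⟨α, hαval, fun y hy => hmono.injective (by rw [hy, hαval])⟩,
    ⟨β, hβval, fun y hy => hanti.injective (by rw [hy, hβval])⟩, ?_, ?_⟩
  · intro α' hα'
    by_contra h
    push_neg at h
    have := hmono.monotone h
    rw [G_zero] at this
    linarith [hα' ▸ this]
  · intro β' hβ'
    by_contra h
    push_neg at h
    have := hanti.antitone h
    rw [G_zero] at this
    linarith [hβ' ▸ this]
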